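/- Let U : [θ_c, π−θ_c] × [π+θ_c, 2π−θ_c] → ℂ be continuous and let z ∈ ℝ². Define I(z) := ∫_{θ_c}^{π−θ_c} ∫_{π+θ_c}^{2π−θ_c} ∫_{π+θ_c}^{2π−θ_c} |U(α,θ₁)+U(α,θ₂)|² T(θ₁) e^{−i k₋ z·dᵗ(θ₁)} T(θ₂) e^{i k₋ z·dᵗ(θ₂)} dθ₁ dθ₂ dα − ( ∫_{π+θ_c}^{2π−θ_c} T(θ) e^{i k₋ z·dᵗ(θ)} dθ ) · ( ∫_{θ_c}^{π−θ_c} ∫_{π+θ_c}^{2π−θ_c} |U(α,θ)|² T(θ) e^{−i k₋ z·dᵗ(θ)} dθ dα ) − ( ∫_{π+θ_c}^{2π−θ_c} T(θ) e^{−i k₋ z·dᵗ(θ)} dθ ) · ( ∫_{θ_c}^{π−θ_c} ∫_{π+θ_c}^{2π−θ_c} |U(α,θ)|² T(θ) e^{i k₋ z·dᵗ(θ)} dθ dα ). Then I(z) = ∫_{θ_c}^{π−θ_c} |v(α)|² dα + ∫_{θ_c}^{π−θ_c} |w(α)|² dα, where v(α) := ∫_{π+θ_c}^{2π−θ_c}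 U(α,θ) T(θ) e^{−i k₋ z·dᵗ(θ)} dθ and w(α) := ∫_{π+θ_c}^{2π−θ_c} U(α,θ) T(θ) e^{i k₋ z·dᵗ(θ)} dθ. In particular I(z) is a nonnegative real number. -/

import Mathlib

open Real MeasureTheory intervalIntegral

/-- The critical angle `θ_c`: `arccos (k₋/k₊)` if `k₊ > k₋`, and `0` if `k₊ < k₋`. -/
noncomputable def thetac (kp km : ℝ) : ℝ := if km < kp then Real.arccos (km / kp) else 0

/-- The transmitted angle `θᵗ(θ) = 2π - arccos((k₊/k₋) cos θ) ∈ [π, 2π]`. -/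
noncomputable def thetat (kp km θ : ℝ) : ℝ := 2 * Real.pi - Real.arccos (kp / km * Real.cos θ)

/-- The transmission coefficient `T(θ) = 2k₊ sin θ / (k₊ sin θ + k₋ sin θᵗ(θ))`. -/
noncomputable def Tcoef (kp km θ : ℝ) : ℝ :=
  2 * kp * Real.sin θ / (kp * Real.sin θ + km * Real.sin (thetat kp km θ))

/-- The phase `z · dᵗ(θ) = z₁ cos θᵗ(θ) + z₂ sin θᵗ(θ)`. -/
noncomputable def ph (kp km : ℝ) (z : ℝ × ℝ) (θ : ℝ) : ℝ :=
  z.1 * Real.cos (thetat kp km θ) + z.2 * Real.sin (thetat kp km θ)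

/-!
Write `F θ = T(θ) e^{-i k₋ z·dᵗ(θ)}`, so that the `θ₁, θ₂` weight is `F θ₁ · conj (F θ₂)`.
Expanding `|U₁ + U₂|² = |U₁|² + |U₂|² + U₁ conj U₂ + conj U₁ U₂`, every term of the triple integral
becomes a product of a `θ₁`-integral and a `θ₂`-integral: the two `|U|²` terms are exactly the
subtracted products, and the cross terms are `|∫ U F|²` and `|∫ U conj F|²` for each `α`.
All integrability comes from continuity on the compact angle ranges; for `F` this needs the
denominator `k₊ sin θ + k₋ sin θᵗ(θ)` of `T` to stay away from zero on `[π + θ_c, 2π - θ_c]`.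
-/

open Set ComplexConjugate

theorem MeasureTheory.Integrable.conj {X : Type*} [MeasurableSpace X] {μ : Measure X}
    {f : X → ℂ} (hf : Integrable f μ) : Integrable (fun x => conj (f x)) μ :=
  Complex.conjCLE.toContinuousLinearMap.integrable_comp hf

section Measure

variable {X Y : Type*} [MeasurableSpace X] [MeasurableSpace Y] {μ : Measure X} {ν : Measure Y}

theorem integral_integral_sum_mul {ι : Type*} (s : Finset ι) {f : ι → X → ℂ} {g : ι → Y → ℂ}
    (hf : ∀ i ∈ s, Integrable (f i) μ) (hg : ∀ i ∈ s, Integrable (g i) ν) :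
    ∫ x, ∫ y, ∑ i ∈ s, f i x * g i y ∂ν ∂μ = ∑ i ∈ s, (∫ x, f i x ∂μ) * ∫ y, g i y ∂ν := by
  calc ∫ x, ∫ y, ∑ i ∈ s, f i x * g i y ∂ν ∂μ = ∫ x, ∑ i ∈ s, f i x * ∫ y, g i y ∂ν ∂μ := by
        congr 1 with x
        rw [MeasureTheory.integral_finsetSum s fun i hi => (hg i hi).const_mul _]
        simp only [MeasureTheory.integral_const_mul]
    _ = ∑ i ∈ s, (∫ x, f i x ∂μ) * ∫ y, g i y ∂ν := by
        rw [MeasureTheory.integral_finsetSum s fun i hi => (hf i hi).mul_const _]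
        simp only [MeasureTheory.integral_mul_const]

theorem integral_integral_norm_add_sq_mul_mul_conj {u F : X → ℂ} (hF : Integrable F μ)
    (huF : Integrable (fun x => ((‖u x‖ ^ 2 : ℝ) : ℂ) * F x) μ)
    (hv : Integrable (fun x => u x * F x) μ) (hw : Integrable (fun x => u x * conj (F x)) μ) :
    ∫ x, ∫ y, ((‖u x + u y‖ ^ 2 : ℝ) : ℂ) * F x * conj (F y) ∂μ ∂μ =
      (∫ x, conj (F x) ∂μ) * (∫ x, ((‖u x‖ ^ 2 : ℝ) : ℂ) * F x ∂μ) +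
        (∫ x, F x ∂μ) * (∫ x, ((‖u x‖ ^ 2 : ℝ) : ℂ) * conj (F x) ∂μ) +
        ((‖∫ x, u x * F x ∂μ‖ ^ 2 : ℝ) : ℂ) + ((‖∫ x, u x * conj (F x) ∂μ‖ ^ 2 : ℝ) : ℂ) := by
  let f : Fin 4 → X → ℂ := ![fun x => ((‖u x‖ ^ 2 : ℝ) : ℂ) * F x, F, fun x => u x * F x,
    fun x => conj (u x * conj (F x))]
  let g : Fin 4 → X → ℂ := ![fun y => conj (F y), fun y => ((‖u y‖ ^ 2 : ℝ) : ℂ) * conj (F y),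
    fun y => conj (u y * F y), fun y => u y * conj (F y)]
  have hsep : ∀ x y, ((‖u x + u y‖ ^ 2 : ℝ) : ℂ) * F x * conj (F y) = ∑ i, f i x * g i y := by
    intro x y
    simp only [f, g, Fin.sum_univ_four, Matrix.cons_val, ← Complex.mul_conj', map_add, map_mul,
      Complex.conj_conj, Complex.ofReal_pow]
    ring
  have hf : ∀ i ∈ Finset.univ, Integrable (f i) μ := by
    simp only [Finset.mem_univ, forall_const, Fin.forall_fin_succ, IsEmpty.forall_iff]
    exact ⟨huF, hF, hv, hw.conj, trivial⟩
  have hg : ∀ i ∈ Finset.univ, Integrable (g i) μ := by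
    have hu'F : Integrable (fun x => ((‖u x‖ ^ 2 : ℝ) : ℂ) * conj (F x)) μ := by
      simpa only [map_mul, Complex.conj_ofReal] using huF.conj
    simp only [Finset.mem_univ, forall_const, Fin.forall_fin_succ, IsEmpty.forall_iff]
    exact ⟨hF.conj, hu'F, hv.conj, hw, trivial⟩
  simp only [hsep]
  rw [integral_integral_sum_mul _ hf hg]
  simp only [Fin.sum_univ_four, f, g, Matrix.cons_val, integral_conj, Complex.ofReal_pow,
    ← Complex.mul_conj']
  ring

/-- The functional `I(z)` of the paper, with `V = U` and `F θ = T(θ) e^{-i k₋ z·dᵗ(θ)}`. -/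
noncomputable def imagingFunctional (μ : Measure X) (ν : Measure Y) (V : Y → X → ℂ)
    (F : X → ℂ) : ℂ :=
  (∫ α, ∫ x, ∫ y, ((‖V α x + V α y‖ ^ 2 : ℝ) : ℂ) * F x * conj (F y) ∂μ ∂μ ∂ν) -
    (∫ x, conj (F x) ∂μ) * (∫ α, ∫ x, ((‖V α x‖ ^ 2 : ℝ) : ℂ) * F x ∂μ ∂ν) -
    (∫ x, F x ∂μ) * (∫ α, ∫ x, ((‖V α x‖ ^ 2 : ℝ) : ℂ) * conj (F x) ∂μ ∂ν)

theorem imagingFunctional_eq {V : Y → X → ℂ} {F : X → ℂ} (hF : Integrable F μ)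
    (hVF : ∀ᵐ α ∂ν, Integrable (fun x => ((‖V α x‖ ^ 2 : ℝ) : ℂ) * F x) μ)
    (hv : ∀ᵐ α ∂ν, Integrable (fun x => V α x * F x) μ)
    (hw : ∀ᵐ α ∂ν, Integrable (fun x => V α x * conj (F x)) μ)
    (hVF' : Integrable (fun α => ∫ x, ((‖V α x‖ ^ 2 : ℝ) : ℂ) * F x ∂μ) ν)
    (hv' : Integrable (fun α => ‖∫ x, V α x * F x ∂μ‖ ^ 2) ν)
    (hw' : Integrable (fun α => ‖∫ x, V α x * conj (F x) ∂μ‖ ^ 2) ν) :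
    imagingFunctional μ ν V F =
      (((∫ α, ‖∫ x, V α x * F x ∂μ‖ ^ 2 ∂ν) +
        ∫ α, ‖∫ x, V α x * conj (F x) ∂μ‖ ^ 2 ∂ν : ℝ) : ℂ) := by
  have hVF_conj : Integrable (fun α => ∫ x, ((‖V α x‖ ^ 2 : ℝ) : ℂ) * conj (F x) ∂μ) ν := by
    simpa only [← integral_conj, map_mul, Complex.conj_ofReal] using hVF'.conj
  have hexpand := integral_congr_ae (μ := ν) <| by
    filter_upwards [hVF, hv, hw] with α hVFα hvα hwα
    exact integral_integral_norm_add_sq_mul_mul_conj hF hVFα hvα hwα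
  have hA := hVF'.const_mul (∫ x, conj (F x) ∂μ)
  have hB := hVF_conj.const_mul (∫ x, F x ∂μ)
  rw [imagingFunctional, hexpand, MeasureTheory.integral_add ?_ hw'.ofReal,
    MeasureTheory.integral_add ?_ hv'.ofReal, MeasureTheory.integral_add hA hB,
    MeasureTheory.integral_const_mul, MeasureTheory.integral_const_mul, integral_complex_ofReal,
    integral_complex_ofReal, Complex.ofReal_add]
  · ring
  · exact hA.add hB
  · exact (hA.add hB).add hv'.ofReal

end Measure

theorem continuousOn_parametric_intervalIntegral_of_continuousOn {E : Type*}
    [NormedAddCommGroup E] [NormedSpace ℝ E] {f : ℝ → ℝ → E} {a b c d : ℝ} (hab : a ≤ b)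
    (hcd : c ≤ d) (hf : ContinuousOn (Function.uncurry f) (Icc c d ×ˢ Icc a b)) :
    ContinuousOn (fun α => ∫ θ in a..b, f α θ) (Icc c d) := by
  let g : ℝ → ℝ → E := fun α θ => f (projIcc c d hcd α) (projIcc a b hab θ)
  have hg : Continuous (Function.uncurry g) :=
    hf.comp_continuous
      (f := fun p : ℝ × ℝ => ((projIcc c d hcd p.1 : ℝ), (projIcc a b hab p.2 : ℝ))) (by fun_prop)
      fun p => ⟨(projIcc c d hcd p.1).2, (projIcc a b hab p.2).2⟩
  refine (continuous_parametric_intervalIntegral_of_continuous' (μ := volume) hg a b)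
    |>.continuousOn.congr fun α hα => integral_congr fun θ hθ => ?_
  rw [uIcc_of_le hab] at hθ
  simp only [g, projIcc_of_mem hcd hα, projIcc_of_mem hab hθ]

theorem imagingFunctional_restrict_Ioc_eq {a b c d : ℝ} (hab : a ≤ b) (hcd : c ≤ d)
    {V : ℝ → ℝ → ℂ} {F : ℝ → ℂ} (hV : ContinuousOn (Function.uncurry V) (Icc c d ×ˢ Icc a b))
    (hF : ContinuousOn F (Icc a b)) :
    imagingFunctional (volume.restrict (Ioc a b)) (volume.restrict (Ioc c d)) V F =
      (((∫ α in Ioc c d, ‖∫ x in Ioc a b, V α x * F x‖ ^ 2) +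
        ∫ α in Ioc c d, ‖∫ x in Ioc a b, V α x * conj (F x)‖ ^ 2 : ℝ) : ℂ) := by
  have hFsnd : ContinuousOn (fun p : ℝ × ℝ => F p.2) (Icc c d ×ˢ Icc a b) :=
    hF.comp continuousOn_snd fun p hp => hp.2
  have hFconj : ContinuousOn (fun x => conj (F x)) (Icc a b) :=
    Complex.continuous_conj.comp_continuousOn hF
  have hVF : ContinuousOn (Function.uncurry fun α x => ((‖V α x‖ ^ 2 : ℝ) : ℂ) * F x)
      (Icc c d ×ˢ Icc a b) :=
    (Complex.continuous_ofReal.comp_continuousOn (hV.norm.pow 2)).mul hFsnd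
  have hv : ContinuousOn (Function.uncurry fun α x => V α x * F x) (Icc c d ×ˢ Icc a b) :=
    hV.mul hFsnd
  have hw : ContinuousOn (Function.uncurry fun α x => V α x * conj (F x)) (Icc c d ×ˢ Icc a b) :=
    hV.mul (hFconj.comp continuousOn_snd fun p hp => hp.2)
  have slice {g : ℝ → ℝ → ℂ} (hg : ContinuousOn (Function.uncurry g) (Icc c d ×ˢ Icc a b)) :
      ∀ᵐ α ∂volume.restrict (Ioc c d), IntegrableOn (g α) (Ioc a b) := by
    refine ae_restrict_of_forall_mem measurableSet_Ioc fun α hα => ?_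
    refine (ContinuousOn.integrableOn_Icc ?_).mono_set Ioc_subset_Icc_self
    exact hg.comp (f := fun θ => (α, θ)) (Continuous.continuousOn (by fun_prop))
      fun θ hθ => ⟨Ioc_subset_Icc_self hα, hθ⟩
  have param {g : ℝ → ℝ → ℂ} (hg : ContinuousOn (Function.uncurry g) (Icc c d ×ˢ Icc a b)) :
      ContinuousOn (fun α => ∫ x in Ioc a b, g α x) (Icc c d) := by
    simpa only [integral_of_le hab] using
      continuousOn_parametric_intervalIntegral_of_continuousOn hab hcd hg
  refine imagingFunctional_eq ((hF.integrableOn_Icc).mono_set Ioc_subset_Icc_self) (slice hVF)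
    (slice hv) (slice hw) ?_ ?_ ?_
  · exact ((param hVF).integrableOn_Icc).mono_set Ioc_subset_Icc_self
  · exact (((param hv).norm.pow 2).integrableOn_Icc).mono_set Ioc_subset_Icc_self
  · exact (((param hw).norm.pow 2).integrableOn_Icc).mono_set Ioc_subset_Icc_self

theorem thetac_le_pi_div_two {kp km : ℝ} (hkm : 0 ≤ km) : thetac kp km ≤ π / 2 := by
  unfold thetac
  split_ifs with h
  · exact arccos_le_pi_div_two.2 (div_nonneg hkm (hkm.trans h.le))
  · positivity

theorem sin_thetat (kp km θ : ℝ) : sin (thetat kp km θ) = -√(1 - (kp / km * cos θ) ^ 2) := by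
  rw [thetat, sin_two_pi_sub, sin_arccos]

theorem continuous_thetat (kp km : ℝ) : Continuous (thetat kp km) := by
  unfold thetat; fun_prop

theorem continuous_ph (kp km : ℝ) (z : ℝ × ℝ) : Continuous (ph kp km z) := by
  have := continuous_thetat kp km
  unfold ph; fun_prop

/-- Both summands are `≤ 0`; the first is `< 0` off `θ ∈ {π, 2π}`, which `θ_c > 0` excludes when
`k₋ < k₊`, and the second is `< 0` whenever `k₊ < k₋`. -/
theorem Tcoef_denom_neg {kp km θ : ℝ} (hkp : 0 < kp) (hkm : 0 < km) (hne : kp ≠ km)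
    (hθ : θ ∈ Icc (π + thetac kp km) (2 * π - thetac kp km)) :
    kp * sin θ + km * sin (thetat kp km θ) < 0 := by
  have hsin : sin θ = -sin (θ - π) := by rw [sin_sub_pi, neg_neg]
  rcases hne.lt_or_gt with hlt | hgt
  · have hc : thetac kp km = 0 := if_neg hlt.not_gt
    rw [hc] at hθ
    have hcos : (kp / km * cos θ) ^ 2 < 1 := by
      have : (kp / km) ^ 2 < 1 := (sq_lt_one_iff₀ (by positivity)).2 ((div_lt_one hkm).2 hlt)
      rw [mul_pow]
      nlinarith [cos_sq_le_one θ, sq_nonneg (kp / km)]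
    have : 0 ≤ sin (θ - π) :=
      sin_nonneg_of_nonneg_of_le_pi (by linarith [hθ.1]) (by linarith [hθ.2])
    have : 0 < √(1 - (kp / km * cos θ) ^ 2) := sqrt_pos.2 (by linarith)
    rw [sin_thetat, hsin]
    nlinarith
  · have hc : 0 < thetac kp km := by
      rw [thetac, if_pos hgt]
      exact arccos_pos.2 ((div_lt_one hkp).2 hgt)
    have : 0 < sin (θ - π) := sin_pos_of_pos_of_lt_pi (by linarith [hθ.1]) (by linarith [hθ.2])
    have : 0 ≤ √(1 - (kp / km * cos θ) ^ 2) := sqrt_nonneg _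
    rw [sin_thetat, hsin]
    nlinarith

theorem continuousOn_Tcoef {kp km : ℝ} (hkp : 0 < kp) (hkm : 0 < km) (hne : kp ≠ km) :
    ContinuousOn (Tcoef kp km) (Icc (π + thetac kp km) (2 * π - thetac kp km)) := by
  have := continuous_thetat kp km
  exact ContinuousOn.div (by fun_prop) (by fun_prop) fun θ hθ =>
    (Tcoef_denom_neg hkp hkm hne hθ).ne

/-- Theorem 2.2 of the paper (decomposition `I = I₁ + I₂` of the phaseless imaging
functional): for continuous phaseless data `|U(α,θ₁) + U(α,θ₂)|²`, the imaging
functional `I(z)` equals `∫ |v(α)|² dα + ∫ |w(α)|² dα`, where `v` and `w` are the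
indicated superposed far-field patterns; in particular `I(z)` is a nonnegative real
number. -/
theorem imaging_functional_decomposition
    (kp km : ℝ) (hkp : 0 < kp) (hkm : 0 < km) (hne : kp ≠ km)
    (U : ℝ → ℝ → ℂ)
    (hU : ContinuousOn (fun p : ℝ × ℝ => U p.1 p.2)
      (Set.Icc (thetac kp km) (Real.pi - thetac kp km) ×ˢ
        Set.Icc (Real.pi + thetac kp km) (2 * Real.pi - thetac kp km)))
    (z : ℝ × ℝ) :
    (∫ α in (thetac kp km)..(Real.pi - thetac kp km),
        ∫ θ₁ in (Real.pi + thetac kp km)..(2 * Real.pi - thetac kp km),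
          ∫ θ₂ in (Real.pi + thetac kp km)..(2 * Real.pi - thetac kp km),
            ((‖U α θ₁ + U α θ₂‖ ^ 2 : ℝ) : ℂ) *
              (Tcoef kp km θ₁ : ℂ) * Complex.exp (-(Complex.I * km * ph kp km z θ₁)) *
              (Tcoef kp km θ₂ : ℂ) * Complex.exp (Complex.I * km * ph kp km z θ₂)) -
      (∫ θ in (Real.pi + thetac kp km)..(2 * Real.pi - thetac kp km),
          (Tcoef kp km θ : ℂ) * Complex.exp (Complex.I * km * ph kp km z θ)) *
        (∫ α in (thetac kp km)..(Real.pi - thetac kp km),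
          ∫ θ in (Real.pi + thetac kp km)..(2 * Real.pi - thetac kp km),
            ((‖U α θ‖ ^ 2 : ℝ) : ℂ) *
              (Tcoef kp km θ : ℂ) * Complex.exp (-(Complex.I * km * ph kp km z θ))) -
      (∫ θ in (Real.pi + thetac kp km)..(2 * Real.pi - thetac kp km),
          (Tcoef kp km θ : ℂ) * Complex.exp (-(Complex.I * km * ph kp km z θ))) *
        (∫ α in (thetac kp km)..(Real.pi - thetac kp km),
          ∫ θ in (Real.pi + thetac kp km)..(2 * Real.pi - thetac kp km),
            ((‖U α θ‖ ^ 2 : ℝ) : ℂ) *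
              (Tcoef kp km θ : ℂ) * Complex.exp (Complex.I * km * ph kp km z θ)) =
    (((∫ α in (thetac kp km)..(Real.pi - thetac kp km),
        ‖∫ θ in (Real.pi + thetac kp km)..(2 * Real.pi - thetac kp km),
            U α θ * (Tcoef kp km θ : ℂ) *
              Complex.exp (-(Complex.I * km * ph kp km z θ))‖ ^ 2) +
      (∫ α in (thetac kp km)..(Real.pi - thetac kp km),
        ‖∫ θ in (Real.pi + thetac kp km)..(2 * Real.pi - thetac kp km),
            U α θ * (Tcoef kp km θ : ℂ) *
              Complex.exp (Complex.I * km * ph kp km z θ)‖ ^ 2) : ℝ) : ℂ) := by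
  have hc := thetac_le_pi_div_two (kp := kp) hkm.le
  have hab : π + thetac kp km ≤ 2 * π - thetac kp km := by linarith
  have hcd : thetac kp km ≤ π - thetac kp km := by linarith
  set F : ℝ → ℂ := fun θ => (Tcoef kp km θ : ℂ) * Complex.exp (-(Complex.I * km * ph kp km z θ))
  have hF : ContinuousOn F (Icc (π + thetac kp km) (2 * π - thetac kp km)) := by
    have := continuous_ph kp km z
    exact (Complex.continuous_ofReal.comp_continuousOn (continuousOn_Tcoef hkp hkm hne)).mul
      (Continuous.continuousOn (by fun_prop))
  have hF_conj (θ : ℝ) :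
      conj (F θ) = (Tcoef kp km θ : ℂ) * Complex.exp (Complex.I * km * ph kp km z θ) := by
    simp only [F, map_mul, Complex.conj_ofReal, ← Complex.exp_conj, map_neg, Complex.conj_I,
      neg_mul, neg_neg]
  have key := imagingFunctional_restrict_Ioc_eq hab hcd hU hF
  simp only [imagingFunctional, hF_conj] at key
  simp only [F, integral_of_le hab, integral_of_le hcd, mul_assoc] at key ⊢
  exact key
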